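/- arXiv:1306.3814 — 3 statements merged into one kernel-verified Lean document; each statement's English description precedes it below -/
import Mathlib

section
/- Let K ⊆ ℝⁿ be a proper cone. The set of K-irreducible matrices is open in π(K): if A ∈ π(K) satisfies (I + A)^{n-1}(K \ {0}) ⊆ int K, then there exists ε > 0 such that every B ∈ π(K) with ‖B - A‖ < ε also satisfies (I + B)^{n-1}(K \ {0}) ⊆ int K. -/
/-! Evaluation `(T, x) ↦ T x` is jointly continuous, so by the tube lemma the maps sending a compact
set into an open set form an open set of operators. Homogeneity reduces the condition
`T (K \ {0}) ⊆ int K` to the compact set `K ∩ sphere 0 1`, and `B ↦ (1 + B) ^ (n - 1)` is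
continuous for the operator norm. -/

open Matrix Set
noncomputable section

variable {n : ℕ}

/-- A proper cone: convex, a cone, pointed, closed, with nonempty interior. -/
def IsProperCone (K : Set (Fin n → ℝ)) : Prop :=
  Convex ℝ K ∧ (∀ (r : ℝ), 0 < r → ∀ x ∈ K, r • x ∈ K) ∧
    K ∩ (-K) = {0} ∧ IsClosed K ∧ (interior K).Nonempty

/-- A compact base of the cone `K`. -/
def IsCompactBase (K B : Set (Fin n → ℝ)) : Prop :=
  IsCompact B ∧ (0 : Fin n → ℝ) ∉ closure B ∧
    K = {y | ∃ r : ℝ, 0 ≤ r ∧ ∃ x ∈ B, y = r • x}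

/-- A face of the cone `K`: a subcone such that `x ∈ F`, `0 ≤_K y ≤_K x` implies `y ∈ F`. -/
def IsFace (K F : Set (Fin n → ℝ)) : Prop :=
  F ⊆ K ∧ (∀ (r : ℝ), 0 < r → ∀ x ∈ F, r • x ∈ F) ∧
    (∀ x ∈ F, ∀ y ∈ K, x - y ∈ K → y ∈ F)

/-- `A ∈ π(K)`, i.e. `A K ⊆ K`. -/
def MapsCone (A : Matrix (Fin n) (Fin n) ℝ) (K : Set (Fin n → ℝ)) : Prop :=
  ∀ x ∈ K, A.mulVec x ∈ K

/-- `A` is `K`-irreducible: `A ∈ π(K)` and `A` leaves no nontrivial face of `K` invariant. -/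
def KIrreducible (K : Set (Fin n → ℝ)) (A : Matrix (Fin n) (Fin n) ℝ) : Prop :=
  MapsCone A K ∧ ∀ F : Set (Fin n → ℝ), IsFace K F → F ≠ {0} → F ≠ K →
    ¬ (A.mulVec '' F ⊆ F)

/-- Spectral radius: the maximum modulus of complex eigenvalues of a real matrix. -/
def specRad (A : Matrix (Fin n) (Fin n) ℝ) : ℝ :=
  sSup ((fun z : ℂ => ‖z‖) '' spectrum ℂ (A.map (algebraMap ℝ ℂ)))

/-- Operator norm of a matrix induced by the reference norm on `Fin n → ℝ`. -/
def opNorm (A : Matrix (Fin n) (Fin n) ℝ) : ℝ :=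
  ‖LinearMap.toContinuousLinearMap A.mulVecLin‖

/-- The set of products of `t` elements of `M` (the time-`t` evolution operators). -/
def ProdSet (M : Set (Matrix (Fin n) (Fin n) ℝ)) : ℕ → Set (Matrix (Fin n) (Fin n) ℝ)
  | 0 => {1}
  | (t + 1) => {P | ∃ A ∈ M, ∃ Q ∈ ProdSet M t, P = A * Q}

/-- The joint spectral radius of the discrete-time semigroup generated by `M`. -/
def jsr (M : Set (Matrix (Fin n) (Fin n) ℝ)) : ℝ :=
  ⨅ t : {t : ℕ // 0 < t}, (sSup (opNorm '' ProdSet M t.1)) ^ ((t.1 : ℝ)⁻¹)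

/-- `N` is a norm on `Fin n → ℝ`. -/
def IsNorm (N : (Fin n → ℝ) → ℝ) : Prop :=
  (∀ x, N x = 0 → x = 0) ∧ (∀ (c : ℝ) (x), N (c • x) = |c| * N x) ∧
    (∀ x y, N (x + y) ≤ N x + N y)

/-- The operator norm on matrices induced by a vector norm `v`. -/
def vop (v : (Fin n → ℝ) → ℝ) (A : Matrix (Fin n) (Fin n) ℝ) : ℝ :=
  sSup ((fun x => v (A.mulVec x)) '' {x | v x ≤ 1})

/-- The joint spectral radius computed via the matrix norm `vop v`. -/
def jsrWith (v : (Fin n → ℝ) → ℝ) (M : Set (Matrix (Fin n) (Fin n) ℝ)) : ℝ :=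
  ⨅ t : {t : ℕ // 0 < t}, (sSup (vop v '' ProdSet M t.1)) ^ ((t.1 : ℝ)⁻¹)

/-- Hausdorff distance between sets of matrices w.r.t. the matrix norm `ν`. -/
def hausdorffWith (ν : Matrix (Fin n) (Fin n) ℝ → ℝ)
    (M N : Set (Matrix (Fin n) (Fin n) ℝ)) : ℝ :=
  max (sSup ((fun B => sInf ((fun A => ν (A - B)) '' M)) '' N))
      (sSup ((fun A => sInf ((fun B => ν (A - B)) '' N)) '' M))

/-- Eccentricity of a norm `v` relative to the reference norm. -/
def ecc (v : (Fin n → ℝ) → ℝ) : ℝ :=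
  sSup (v '' {x : Fin n → ℝ | ‖x‖ = 1}) / sInf (v '' {x : Fin n → ℝ | ‖x‖ = 1})

/-- `K`-absolute value w.r.t. the simplicial cone generated by the basis `b`. -/
def absK (b : Module.Basis (Fin n) ℝ (Fin n → ℝ)) (x : Fin n → ℝ) : Fin n → ℝ :=
  ∑ i, |b.repr x i| • b i

theorem ContinuousLinearMap.isOpen_setOfPred_mapsTo {𝕜 E F : Type*} [NontriviallyNormedField 𝕜]
    [NormedAddCommGroup E] [NormedSpace 𝕜 E] [NormedAddCommGroup F] [NormedSpace 𝕜 F]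
    {S : Set E} {U : Set F} (hS : IsCompact S) (hU : IsOpen U) :
    IsOpen {T : E →L[𝕜] F | MapsTo T S U} := by
  refine isOpen_iff_eventually.mpr fun T₀ hT₀ => hS.eventually_forall_of_forall_eventually ?_
  intro x hx
  have heval : Continuous fun z : (E →L[𝕜] F) × E => z.1 z.2 :=
    continuous_fst.clm_apply continuous_snd
  exact heval.continuousAt.preimage_mem_nhds (hU.mem_nhds (hT₀ hx))

section Cone

variable {E : Type*} [NormedAddCommGroup E] [NormedSpace ℝ E]

open Pointwise in
theorem smul_mem_interior_of_pos {K : Set E} (hK : ∀ r : ℝ, 0 < r → ∀ x ∈ K, r • x ∈ K)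
    {r : ℝ} (hr : 0 < r) {y : E} (hy : y ∈ interior K) : r • y ∈ interior K := by
  have hsmul : r • interior K ⊆ interior K := by
    rw [← interior_smul₀ hr.ne']
    exact interior_mono (smul_set_subset_iff.mpr fun x hx => hK r hr x hx)
  exact hsmul (smul_mem_smul_set hy)

theorem isOpen_setOfPred_forall_ne_zero_mem [FiniteDimensional ℝ E] {F : Type*}
    [NormedAddCommGroup F] [NormedSpace ℝ F] {K : Set E} {U : Set F} (hKc : IsClosed K)
    (hK : ∀ r : ℝ, 0 < r → ∀ x ∈ K, r • x ∈ K) (hUo : IsOpen U)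
    (hU : ∀ r : ℝ, 0 < r → ∀ y ∈ U, r • y ∈ U) :
    IsOpen {T : E →L[ℝ] F | ∀ x ∈ K, x ≠ 0 → T x ∈ U} := by
  convert ContinuousLinearMap.isOpen_setOfPred_mapsTo (𝕜 := ℝ)
    ((isCompact_sphere 0 1).inter_left hKc) hUo using 1
  ext T
  refine ⟨fun hT x hx => hT x hx.1 (ne_zero_of_mem_unit_sphere ⟨x, hx.2⟩), fun hT x hx hx0 => ?_⟩
  have hnorm : 0 < ‖x‖ := norm_pos_iff.mpr hx0
  have hunit : ‖x‖⁻¹ • x ∈ K ∩ Metric.sphere 0 1 := by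
    refine ⟨hK _ (inv_pos.mpr hnorm) x hx, ?_⟩
    rw [mem_sphere_zero_iff_norm, norm_smul, norm_inv, norm_norm, inv_mul_cancel₀ hnorm.ne']
  have hTx : T x = ‖x‖ • T (‖x‖⁻¹ • x) := by
    rw [map_smul, smul_inv_smul₀ hnorm.ne']
  exact hTx ▸ hU _ hnorm _ (hT hunit)

end Cone

def Matrix.toEndCLM : Matrix (Fin n) (Fin n) ℝ →ₐ[ℝ] ((Fin n → ℝ) →L[ℝ] (Fin n → ℝ)) :=
  (Module.End.toContinuousLinearMap (Fin n → ℝ)).toAlgHom.comp Matrix.toLinAlgEquiv'.toAlgHom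

theorem Matrix.toEndCLM_apply (B : Matrix (Fin n) (Fin n) ℝ) (x : Fin n → ℝ) :
    toEndCLM B x = B *ᵥ x := rfl

theorem opNorm_eq_norm_toEndCLM (B : Matrix (Fin n) (Fin n) ℝ) : opNorm B = ‖toEndCLM B‖ := rfl

theorem stmt3_general (K : Set (Fin n → ℝ)) (hK : IsProperCone K)
    (A : Matrix (Fin n) (Fin n) ℝ)
    (h : ∀ x ∈ K, x ≠ 0 → ((1 + A) ^ (n - 1)).mulVec x ∈ interior K) :
    ∃ ε : ℝ, 0 < ε ∧ ∀ B : Matrix (Fin n) (Fin n) ℝ, MapsCone B K →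
      opNorm (B - A) < ε →
      ∀ x ∈ K, x ≠ 0 → ((1 + B) ^ (n - 1)).mulVec x ∈ interior K := by
  obtain ⟨-, hcone, -, hclosed, -⟩ := hK
  set P : Set ((Fin n → ℝ) →L[ℝ] (Fin n → ℝ)) := {T | ∀ x ∈ K, x ≠ 0 → T x ∈ interior K}
  have hopen : IsOpen {T | (1 + T) ^ (n - 1) ∈ P} :=
    (isOpen_setOfPred_forall_ne_zero_mem hclosed hcone isOpen_interior
      fun _ hr _ hy => smul_mem_interior_of_pos hcone hr hy).preimage
      ((continuous_const.add continuous_id).pow _)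
  have hmem (B : Matrix (Fin n) (Fin n) ℝ) : (1 + toEndCLM B) ^ (n - 1) ∈ P ↔
      ∀ x ∈ K, x ≠ 0 → ((1 + B) ^ (n - 1)).mulVec x ∈ interior K := by
    simp only [P, mem_ofPred_eq, ← map_one toEndCLM, ← map_add, ← map_pow, toEndCLM_apply]
  obtain ⟨ε, hε, hball⟩ := Metric.isOpen_iff.mp hopen _ ((hmem A).mpr h)
  refine ⟨ε, hε, fun B _ hBA => (hmem B).mp (hball ?_)⟩
  rwa [Metric.mem_ball, dist_eq_norm, ← map_sub, ← opNorm_eq_norm_toEndCLM]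

/-- `K`-irreducibility (characterised by `(I+A)^(n-1)(K\{0}) ⊆ int K`)
is an open property in `π(K)`. -/
theorem stmt3 (K : Set (Fin n → ℝ)) (hK : IsProperCone K)
    (A : Matrix (Fin n) (Fin n) ℝ) (hA : MapsCone A K)
    (h : ∀ x ∈ K, x ≠ 0 → ((1 + A) ^ (n - 1)).mulVec x ∈ interior K) :
    ∃ ε : ℝ, 0 < ε ∧ ∀ B : Matrix (Fin n) (Fin n) ℝ, MapsCone B K →
      opNorm (B - A) < ε →
      ∀ x ∈ K, x ≠ 0 → ((1 + B) ^ (n - 1)).mulVec x ∈ interior K :=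
  stmt3_general K hK A h
end
end

section
/- Let K ⊆ ℝⁿ be a proper cone and S ⊆ π(K) a bounded matrix semigroup containing the identity with ρ(S) = 1, and let ‖·‖ be a K-monotone norm on ℝⁿ. Then v(x) := sup{‖Sx‖ : S ∈ S} defines a norm on ℝⁿ which is K-monotone and extremal for S, i.e. v(Sx) ≤ v(x) for all S ∈ S and x ∈ ℝⁿ. -/
open Matrix Set
noncomputable section

variable {n : ℕ}

/-! Boundedness of `S` makes the supremum `sup {N (A x) : A ∈ S}` finite. The norm axioms and
`K`-monotonicity then hold for each `x ↦ N (A x)` and pass to the supremum, `I ∈ S` giving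
`N ≤ v` and hence definiteness; extremality holds because `B A ∈ S` for all `B ∈ S`. -/

namespace IsNorm

variable {N : (Fin n → ℝ) → ℝ}

theorem map_zero (hN : IsNorm N) : N 0 = 0 := by
  simpa using hN.2.1 0 0

theorem nonneg (hN : IsNorm N) (x : Fin n → ℝ) : 0 ≤ N x := by
  have h := hN.2.2 x ((-1 : ℝ) • x)
  rw [hN.2.1, neg_one_smul, add_neg_cancel, hN.map_zero] at h
  norm_num at h
  linarith

theorem le_sum_mul_norm (hN : IsNorm N) (z : Fin n → ℝ) :
    N z ≤ (∑ i, N (Pi.single i 1)) * ‖z‖ := by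
  calc N z = N (∑ i, z i • (Pi.single i 1 : Fin n → ℝ)) := by
        congr 1; funext j; simp [Finset.sum_apply, Pi.single_apply]
    _ ≤ ∑ i, N (z i • (Pi.single i 1 : Fin n → ℝ)) :=
        Finset.le_sum_of_subadditive N hN.map_zero.le hN.2.2 _ _
    _ = ∑ i, |z i| * N (Pi.single i 1) := by simp only [hN.2.1]
    _ ≤ ∑ i, ‖z‖ * N (Pi.single i 1) := by
        gcongr with i
        · exact hN.nonneg _
        · exact norm_le_pi_norm z i
    _ = (∑ i, N (Pi.single i 1)) * ‖z‖ := by rw [Finset.sum_mul]; simp only [mul_comm]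

end IsNorm

theorem norm_mulVec_le_opNorm_mul (A : Matrix (Fin n) (Fin n) ℝ) (x : Fin n → ℝ) :
    ‖A *ᵥ x‖ ≤ opNorm A * ‖x‖ :=
  (LinearMap.toContinuousLinearMap A.mulVecLin).le_opNorm x

def orbitSup (N : (Fin n → ℝ) → ℝ) (S : Set (Matrix (Fin n) (Fin n) ℝ)) (x : Fin n → ℝ) : ℝ :=
  sSup ((fun A => N (A *ᵥ x)) '' S)

section orbitSup

open scoped Pointwise

variable {N : (Fin n → ℝ) → ℝ} {S : Set (Matrix (Fin n) (Fin n) ℝ)}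

theorem bddAbove_image_mulVec (hN : IsNorm N) (hbd : ∃ C : ℝ, ∀ A ∈ S, opNorm A ≤ C)
    (x : Fin n → ℝ) : BddAbove ((fun A => N (A *ᵥ x)) '' S) := by
  obtain ⟨C, hC⟩ := hbd
  have hc : 0 ≤ ∑ i, N (Pi.single i 1) := Finset.sum_nonneg fun i _ => hN.nonneg _
  refine ⟨(∑ i, N (Pi.single i 1)) * (C * ‖x‖), ?_⟩
  rintro _ ⟨A, hA, rfl⟩
  calc N (A *ᵥ x) ≤ (∑ i, N (Pi.single i 1)) * ‖A *ᵥ x‖ := hN.le_sum_mul_norm _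
    _ ≤ (∑ i, N (Pi.single i 1)) * (C * ‖x‖) := by
        gcongr
        exact (norm_mulVec_le_opNorm_mul A x).trans (by gcongr; exact hC A hA)

variable (hbdd : ∀ x, BddAbove ((fun A => N (A *ᵥ x)) '' S))
include hbdd

theorem le_orbitSup {A : Matrix (Fin n) (Fin n) ℝ} (hA : A ∈ S) (x : Fin n → ℝ) :
    N (A *ᵥ x) ≤ orbitSup N S x :=
  le_csSup (hbdd x) ⟨A, hA, rfl⟩

theorem orbitSup_mulVec_le (hsg : ∀ A ∈ S, ∀ B ∈ S, A * B ∈ S) (hne : S.Nonempty)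
    {A : Matrix (Fin n) (Fin n) ℝ} (hA : A ∈ S) (x : Fin n → ℝ) :
    orbitSup N S (A *ᵥ x) ≤ orbitSup N S x := by
  refine csSup_le (hne.image _) ?_
  rintro _ ⟨B, hB, rfl⟩
  simpa only [mulVec_mulVec] using le_orbitSup hbdd (hsg B hB A hA) x

theorem orbitSup_le_of_sub_mem {K : Set (Fin n → ℝ)}
    (hmono : ∀ x y : Fin n → ℝ, x ∈ K → y - x ∈ K → N x ≤ N y)
    (hπ : ∀ A ∈ S, MapsCone A K) (hne : S.Nonempty)
    {x y : Fin n → ℝ} (hx : x ∈ K) (hyx : y - x ∈ K) : orbitSup N S x ≤ orbitSup N S y := by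
  refine csSup_le (hne.image _) ?_
  rintro _ ⟨A, hA, rfl⟩
  have hAyx : A *ᵥ y - A *ᵥ x ∈ K := by rw [← mulVec_sub]; exact hπ A hA _ hyx
  exact (hmono _ _ (hπ A hA x hx) hAyx).trans (le_orbitSup hbdd hA y)

theorem isNorm_orbitSup (hN : IsNorm N) (hI : (1 : Matrix (Fin n) (Fin n) ℝ) ∈ S) :
    IsNorm (orbitSup N S) := by
  have hne : S.Nonempty := ⟨1, hI⟩
  refine ⟨fun x hx => hN.1 x ?_, fun c x => ?_, fun x y => ?_⟩
  · have h := le_orbitSup hbdd hI x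
    rw [one_mulVec, hx] at h
    exact le_antisymm h (hN.nonneg x)
  · have himage : (fun A => N (A *ᵥ (c • x))) '' S = |c| • (fun A => N (A *ᵥ x)) '' S := by
      rw [← Set.image_smul, ← Set.image_comp]
      refine Set.image_congr fun A _ => ?_
      simp only [Function.comp, mulVec_smul, hN.2.1, smul_eq_mul]
    rw [orbitSup, himage, Real.sSup_smul_of_nonneg (abs_nonneg c), smul_eq_mul, orbitSup]
  · refine csSup_le (hne.image _) ?_
    rintro _ ⟨A, hA, rfl⟩
    calc N (A *ᵥ (x + y)) ≤ N (A *ᵥ x) + N (A *ᵥ y) := by rw [mulVec_add]; exact hN.2.2 _ _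
      _ ≤ orbitSup N S x + orbitSup N S y :=
          add_le_add (le_orbitSup hbdd hA x) (le_orbitSup hbdd hA y)

end orbitSup

theorem stmt10_general (K : Set (Fin n → ℝ))
    (S : Set (Matrix (Fin n) (Fin n) ℝ))
    (hsg : ∀ A ∈ S, ∀ B ∈ S, A * B ∈ S) (hI : (1 : Matrix (Fin n) (Fin n) ℝ) ∈ S)
    (hπ : ∀ A ∈ S, MapsCone A K) (hbd : ∃ C : ℝ, ∀ A ∈ S, opNorm A ≤ C)
    (N : (Fin n → ℝ) → ℝ) (hN : IsNorm N)
    (hmono : ∀ x y : Fin n → ℝ, x ∈ K → y - x ∈ K → N x ≤ N y)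
    (v : (Fin n → ℝ) → ℝ)
    (hv : ∀ x, v x = sSup ((fun A => N (A.mulVec x)) '' S)) :
    IsNorm v ∧ (∀ x y : Fin n → ℝ, x ∈ K → y - x ∈ K → v x ≤ v y) ∧
      ∀ A ∈ S, ∀ x, v (A.mulVec x) ≤ v x := by
  obtain rfl : v = orbitSup N S := funext hv
  have hbdd := bddAbove_image_mulVec hN hbd
  exact ⟨isNorm_orbitSup hbdd hN hI,
    fun _ _ => orbitSup_le_of_sub_mem hbdd hmono hπ ⟨1, hI⟩,
    fun _ hA => orbitSup_mulVec_le hbdd hsg ⟨1, hI⟩ hA⟩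

/-- for a bounded semigroup `S ⊆ π(K)` with `I ∈ S` and a
`K`-monotone norm `N`, `v x = sup {N (S x) : S ∈ S}` is a `K`-monotone extremal
norm for `S`. -/
theorem stmt10 (K : Set (Fin n → ℝ)) (hK : IsProperCone K)
    (S : Set (Matrix (Fin n) (Fin n) ℝ))
    (hsg : ∀ A ∈ S, ∀ B ∈ S, A * B ∈ S) (hI : (1 : Matrix (Fin n) (Fin n) ℝ) ∈ S)
    (hπ : ∀ A ∈ S, MapsCone A K) (hbd : ∃ C : ℝ, ∀ A ∈ S, opNorm A ≤ C)
    (N : (Fin n → ℝ) → ℝ) (hN : IsNorm N)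
    (hmono : ∀ x y : Fin n → ℝ, x ∈ K → y - x ∈ K → N x ≤ N y)
    (v : (Fin n → ℝ) → ℝ)
    (hv : ∀ x, v x = sSup ((fun A => N (A.mulVec x)) '' S)) :
    IsNorm v ∧ (∀ x y : Fin n → ℝ, x ∈ K → y - x ∈ K → v x ≤ v y) ∧
      ∀ A ∈ S, ∀ x, v (A.mulVec x) ≤ v x :=
  stmt10_general K S hsg hI hπ hbd N hN hmono v hv
end
end

section
/- Let K ⊆ ℝⁿ be a proper cone and A ∈ π(K) be K-irreducible, with compact base B of K. Then there exists δ > 0 such that for every matrix S ∈ π(K), every c > 0, and every x ∈ B with Sx ∈ cB, the spectral radius satisfies r((I+A)^{n-1} S) > δc. -/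
open Matrix Set
noncomputable section

variable {n : ℕ}

/-!
Write `M = (I + A)^(n-1)` and `P = M S`. Irreducibility puts the compact set `M B` inside
`int K`, so a single `δ > 0` gives `M y - δ x ∈ K` for all `x, y ∈ B`. If `S x = c y`, then
`P x - δc x = c (M y - δ x) ∈ K`, and since `P` preserves `K` this iterates to
`P^k x - (δc)^k x ∈ K`. A closed pointed cone is normal (`d ‖u‖ ≤ ‖u + v‖` on `K`), so
`‖P^k x‖ ≥ d ‖x‖ (δc)^k`, and Gelfand's formula turns this growth into `r(P) ≥ δc`.
-/

open Filter Topology Metric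

lemma exists_pos_sub_smul_mem_of_isCompact {E : Type*} [NormedAddCommGroup E] [NormedSpace ℝ E]
    {X Y U : Set E} (hX : IsCompact X) (hY : IsCompact Y) (hU : IsOpen U) (hYU : Y ⊆ U) :
    ∃ δ : ℝ, 0 < δ ∧ ∀ x ∈ X, ∀ y ∈ Y, y - δ • x ∈ U := by
  obtain ⟨ε, hε, hthick⟩ := hY.exists_thickening_subset_open hU hYU
  obtain ⟨R, hR⟩ := hX.isBounded.exists_norm_le
  have hR1 : 0 < max R 0 + 1 := by positivity
  refine ⟨ε / (max R 0 + 1), by positivity, fun x hx y hy => hthick ?_⟩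
  refine mem_thickening_iff.mpr ⟨y, hy, ?_⟩
  calc dist (y - (ε / (max R 0 + 1)) • x) y = ε / (max R 0 + 1) * ‖x‖ := by
        rw [dist_eq_norm, sub_sub_cancel_left, norm_neg, norm_smul,
          Real.norm_of_nonneg (by positivity)]
    _ ≤ ε / (max R 0 + 1) * max R 0 := by gcongr; exact (hR x hx).trans (le_max_left _ _)
    _ < ε := by
        rw [div_mul_eq_mul_div, div_lt_iff₀ hR1]; nlinarith [le_max_right R 0]

lemma PointedCone.pow_apply_sub_pow_smul_mem {R E : Type*} [CommSemiring R] [PartialOrder R]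
    [IsOrderedRing R] [AddCommGroup E] [Module R E] (C : PointedCone R E) {f : Module.End R E}
    (hf : ∀ y ∈ C, f y ∈ C) {a : R} (ha : 0 ≤ a) {x : E} (hx : f x - a • x ∈ C) (k : ℕ) :
    (f ^ k) x - a ^ k • x ∈ C := by
  induction k with
  | zero => simp
  | succ k ih =>
    have hsplit : (f ^ (k + 1)) x - a ^ (k + 1) • x
        = f ((f ^ k) x - a ^ k • x) + a ^ k • (f x - a • x) := by
      rw [pow_succ', Module.End.mul_apply, map_sub, map_smul, pow_succ, mul_smul, smul_sub]
      abel
    rw [hsplit]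
    exact C.add_mem (hf _ ih) (C.smul_mem (pow_nonneg ha k) hx)

lemma exists_pos_mul_norm_le_norm_add {E : Type*} [NormedAddCommGroup E] [NormedSpace ℝ E]
    [ProperSpace E] {K : Set E} (hK : IsClosed K) (hsmul : ∀ r : ℝ, 0 < r → ∀ x ∈ K, r • x ∈ K)
    (hpointed : K ∩ -K = {0}) :
    ∃ d > 0, ∀ u ∈ K, ∀ v ∈ K, d * ‖u‖ ≤ ‖u + v‖ := by
  set T := (fun p : E × E => p.1 + p.2) '' ((K ∩ sphere 0 1) ×ˢ (K ∩ closedBall 0 2))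
  have hT : IsCompact T :=
    (((isCompact_sphere 0 1).inter_left hK).prod
      ((isCompact_closedBall 0 2).inter_left hK)).image continuous_add
  have h0T : (0 : E) ∉ T := by
    rintro ⟨⟨u, v⟩, ⟨⟨huK, hu⟩, hvK, -⟩, huv⟩
    have hu0 : u ∈ K ∩ -K :=
      ⟨huK, by rw [Set.mem_neg, neg_eq_of_add_eq_zero_right huv]; exact hvK⟩
    rw [hpointed] at hu0
    simp_all
  obtain ⟨ε, hε, hball⟩ := Metric.isOpen_iff.mp hT.isClosed.isOpen_compl 0 h0T
  have hT_norm : ∀ w ∈ T, ε ≤ ‖w‖ := fun w hw => by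
    by_contra! h
    exact hball (mem_ball_zero_iff.mpr h) hw
  refine ⟨min ε 1, by positivity, fun u hu v hv => ?_⟩
  rcases eq_or_ne u 0 with rfl | hu0
  · simp
  have hnu : 0 < ‖u‖ := norm_pos_iff.mpr hu0
  set u' := ‖u‖⁻¹ • u
  set v' := ‖u‖⁻¹ • v
  have hu' : ‖u'‖ = 1 := by simp [u', norm_smul, hnu.ne']
  have key : min ε 1 ≤ ‖u' + v'‖ := by
    rcases le_or_gt ‖v'‖ 2 with hv' | hv'
    · refine (min_le_left _ _).trans (hT_norm _ ⟨(u', v'), ⟨⟨?_, ?_⟩, ?_, ?_⟩, rfl⟩)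
      · exact hsmul _ (inv_pos.mpr hnu) u hu
      · simpa using hu'
      · exact hsmul _ (inv_pos.mpr hnu) v hv
      · simpa using hv'
    · refine (min_le_right _ _).trans ?_
      have := norm_sub_norm_le v' (-u')
      rw [norm_neg, hu', sub_neg_eq_add, add_comm] at this
      linarith
  calc min ε 1 * ‖u‖ ≤ ‖u' + v'‖ * ‖u‖ := by gcongr
    _ = ‖u + v‖ := by
        rw [← smul_add, norm_smul, norm_inv, norm_norm]
        field_simp

lemma ofReal_le_spectralRadius_of_mul_pow_le_norm_pow {A : Type*} [NormedRing A]
    [NormedAlgebra ℂ A] [CompleteSpace A] (x : A) {C a : ℝ} (hC : 0 < C) (ha : 0 ≤ a)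
    (h : ∀ k : ℕ, C * a ^ k ≤ ‖x ^ k‖) : ENNReal.ofReal a ≤ spectralRadius ℂ x := by
  have hroot : Tendsto (fun k : ℕ => C ^ (1 / k : ℝ) * a) atTop (𝓝 a) := by
    have := ((Real.continuousAt_const_rpow hC.ne').tendsto.comp
      tendsto_one_div_atTop_nhds_zero_nat).mul_const a
    simpa only [Function.comp_def, Real.rpow_zero, one_mul] using this
  refine le_of_tendsto_of_tendsto ((ENNReal.continuous_ofReal.tendsto a).comp hroot)
    (spectrum.pow_norm_pow_one_div_tendsto_nhds_spectralRadius x) ?_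
  filter_upwards [eventually_ne_atTop 0] with k hk
  refine ENNReal.ofReal_le_ofReal ?_
  calc C ^ (1 / k : ℝ) * a = (C * a ^ k) ^ (1 / k : ℝ) := by
        rw [Real.mul_rpow hC.le (by positivity), ← Real.rpow_natCast, ← Real.rpow_mul ha,
          mul_one_div_cancel (by exact_mod_cast hk), Real.rpow_one]
    _ ≤ ‖x ^ k‖ ^ (1 / k : ℝ) := by gcongr; exact h k

lemma spectralRadius_eq_ofReal_sSup_norm {𝕜 A : Type*} [NormedField 𝕜] [ProperSpace 𝕜]
    [NormedRing A] [NormedAlgebra 𝕜 A] [CompleteSpace A] (x : A) :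
    spectralRadius 𝕜 x = ENNReal.ofReal (sSup (norm '' spectrum 𝕜 x)) := by
  rcases (spectrum 𝕜 x).eq_empty_or_nonempty with hempty | hne
  · simp [hempty, spectralRadius]
  obtain ⟨z, hz, hzr⟩ := spectrum.exists_nnnorm_eq_spectralRadius_of_nonempty hne
  have hmax : IsGreatest (norm '' spectrum 𝕜 x) ‖z‖ := by
    refine ⟨⟨z, hz, rfl⟩, ?_⟩
    rintro _ ⟨w, hw, rfl⟩
    have : (‖w‖₊ : ENNReal) ≤ ‖z‖₊ := hzr ▸ le_iSup₂ (α := ENNReal) w hw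
    exact_mod_cast this
  rw [← hzr, hmax.csSup_eq, ofReal_norm]
  rfl

section MatrixNorm

attribute [local instance] Matrix.linftyOpNormedAddCommGroup Matrix.linftyOpNormedRing
  Matrix.linftyOpNormedAlgebra

lemma Matrix.linfty_opNorm_map_ofReal {m : Type*} [Fintype m] (Q : Matrix m m ℝ) :
    ‖Q.map (algebraMap ℝ ℂ)‖ = ‖Q‖ := by
  simp [← coe_nnnorm, Matrix.linfty_opNNNorm_def, Complex.nnnorm_real]

lemma le_specRad_of_mul_pow_le_norm_pow_mulVec (P : Matrix (Fin n) (Fin n) ℝ) (x : Fin n → ℝ)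
    {C a : ℝ} (hC : 0 < C) (ha : 0 ≤ a) (h : ∀ k : ℕ, C * a ^ k ≤ ‖(P ^ k) *ᵥ x‖) :
    a ≤ specRad P := by
  have hx : 0 < ‖x‖ := hC.trans_le (by simpa using h 0)
  have : CompleteSpace (Matrix (Fin n) (Fin n) ℂ) := FiniteDimensional.complete ℂ _
  have hPc : ∀ k : ℕ, C / ‖x‖ * a ^ k ≤ ‖P.map (algebraMap ℝ ℂ) ^ k‖ := fun k => by
    rw [← Matrix.map_pow, Matrix.linfty_opNorm_map_ofReal, div_mul_eq_mul_div,
      div_le_iff₀ hx]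
    exact (h k).trans (Matrix.linfty_opNorm_mulVec _ _)
  have := ofReal_le_spectralRadius_of_mul_pow_le_norm_pow _ (div_pos hC hx) ha hPc
  rw [spectralRadius_eq_ofReal_sSup_norm] at this
  refine (ENNReal.ofReal_le_ofReal_iff (Real.sSup_nonneg ?_)).mp this
  rintro _ ⟨z, -, rfl⟩
  exact norm_nonneg z

end MatrixNorm

lemma IsProperCone.zero_mem {K : Set (Fin n → ℝ)} (hK : IsProperCone K) : 0 ∈ K :=
  (hK.2.2.1.symm.subset rfl).1

lemma IsProperCone.add_mem {K : Set (Fin n → ℝ)} (hK : IsProperCone K) {u v : Fin n → ℝ}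
    (hu : u ∈ K) (hv : v ∈ K) : u + v ∈ K := by
  have hmid := hK.1 hu hv (by norm_num : (0 : ℝ) ≤ 1 / 2) (by norm_num : (0 : ℝ) ≤ 1 / 2)
    (by norm_num)
  convert hK.2.1 2 two_pos _ hmid using 1
  module

def IsProperCone.toPointedCone {K : Set (Fin n → ℝ)} (hK : IsProperCone K) :
    PointedCone ℝ (Fin n → ℝ) where
  carrier := K
  zero_mem' := hK.zero_mem
  add_mem' := hK.add_mem
  smul_mem' := by
    rintro ⟨r, hr⟩ x hx
    rcases hr.eq_or_lt with rfl | hr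
    · simpa using hK.zero_mem
    · exact hK.2.1 r hr x hx

@[simp]
lemma IsProperCone.mem_toPointedCone {K : Set (Fin n → ℝ)} (hK : IsProperCone K)
    {x : Fin n → ℝ} : x ∈ hK.toPointedCone ↔ x ∈ K :=
  Iff.rfl

lemma IsCompactBase.subset {K B : Set (Fin n → ℝ)} (hB : IsCompactBase K B) : B ⊆ K := by
  intro x hx
  rw [hB.2.2]
  exact ⟨1, zero_le_one, x, hx, (one_smul ℝ x).symm⟩

lemma IsCompactBase.ne_zero {K B : Set (Fin n → ℝ)} (hB : IsCompactBase K B) {x : Fin n → ℝ}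
    (hx : x ∈ B) : x ≠ 0 := by
  rintro rfl
  exact hB.2.1 (subset_closure hx)

theorem stmt18_general (K B : Set (Fin n → ℝ)) (hK : IsProperCone K)
    (hB : IsCompactBase K B)
    (A : Matrix (Fin n) (Fin n) ℝ)
    (hirr : ∀ x ∈ K, x ≠ 0 → ((1 + A) ^ (n - 1)).mulVec x ∈ interior K) :
    ∃ δ : ℝ, 0 < δ ∧ ∀ S : Matrix (Fin n) (Fin n) ℝ, MapsCone S K →
      ∀ c : ℝ, 0 < c → ∀ x ∈ B, (∃ y ∈ B, S.mulVec x = c • y) →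
        δ * c < specRad ((1 + A) ^ (n - 1) * S) := by
  set M := (1 + A) ^ (n - 1)
  have hMK : ∀ z ∈ K, M *ᵥ z ∈ K := fun z hz => by
    rcases eq_or_ne z 0 with rfl | hz0
    · simpa using hK.zero_mem
    · exact interior_subset (hirr z hz hz0)
  obtain ⟨δ, hδ, hMδ⟩ := exists_pos_sub_smul_mem_of_isCompact hB.1
    (hB.1.image (M.mulVecLin.continuous_of_finiteDimensional)) isOpen_interior
    (by rintro _ ⟨y, hy, rfl⟩; exact hirr y (hB.subset hy) (hB.ne_zero hy))
  obtain ⟨d, hd, hnormal⟩ := exists_pos_mul_norm_le_norm_add hK.2.2.2.1 hK.2.1 hK.2.2.1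
  refine ⟨δ / 2, half_pos hδ, fun S hS c hc x hx ⟨y, hy, hSxy⟩ => ?_⟩
  set C := hK.toPointedCone with hC
  set P := M * S
  have hPK : ∀ z ∈ C, P.toLin' z ∈ C := fun z hz => by
    simpa [hC, P, ← Matrix.mulVec_mulVec] using hMK _ (hS z hz)
  have hPx : P.toLin' x - (δ * c) • x ∈ C := by
    have : P *ᵥ x - (δ * c) • x = c • (M *ᵥ y - δ • x) := by
      rw [← Matrix.mulVec_mulVec, hSxy, Matrix.mulVec_smul]
      module
    simpa [this] using C.smul_mem hc.le (interior_subset (hMδ x hx _ ⟨y, hy, rfl⟩))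
  have hgrowth : ∀ k : ℕ, d * ‖x‖ * (δ * c) ^ k ≤ ‖(P ^ k) *ᵥ x‖ := fun k => by
    have hsplit := hnormal _ (C.smul_mem (by positivity : 0 ≤ (δ * c) ^ k) (hB.subset hx)) _
      (C.pow_apply_sub_pow_smul_mem hPK (by positivity) hPx k)
    rw [add_sub_cancel, ← Matrix.toLin'_pow, Matrix.toLin'_apply, norm_smul,
      Real.norm_of_nonneg (by positivity)] at hsplit
    linarith
  have hδc := le_specRad_of_mul_pow_le_norm_pow_mulVec P x
    (mul_pos hd (norm_pos_iff.mpr (hB.ne_zero hx))) (by positivity) hgrowth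
  linarith [mul_pos hδ hc]

/-- for `K`-irreducible `A ∈ π(K)` with compact base `B`, there is
`δ > 0` such that `Sx ∈ cB` for `S ∈ π(K)`, `x ∈ B`, `c > 0` forces
`r((I+A)^(n-1) S) > δ c`. -/
theorem stmt18 (K B : Set (Fin n → ℝ)) (hK : IsProperCone K)
    (hB : IsCompactBase K B)
    (A : Matrix (Fin n) (Fin n) ℝ) (hA : MapsCone A K)
    (hirr : ∀ x ∈ K, x ≠ 0 → ((1 + A) ^ (n - 1)).mulVec x ∈ interior K) :
    ∃ δ : ℝ, 0 < δ ∧ ∀ S : Matrix (Fin n) (Fin n) ℝ, MapsCone S K →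
      ∀ c : ℝ, 0 < c → ∀ x ∈ B, (∃ y ∈ B, S.mulVec x = c • y) →
        δ * c < specRad ((1 + A) ^ (n - 1) * S) :=
  stmt18_general K B hK hB A hirr
end
end
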